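/- arXiv:1312.3616 — 9 statements merged into one kernel-verified Lean document; each statement's English description precedes it below -/
import Mathlib

section
/- Let G be a finite group acting linearly on a finite-dimensional vector space V over a field k, and let g ∈ G act on V not as the identity. Suppose κ_g : V × V → k is an alternating bilinear form satisfying κ_g(u,v)(g·w - w) + κ_g(v,w)(g·u - u) + κ_g(w,u)(g·v - v) = 0 for all u,v,w ∈ V. If κ_g is not identically zero, then the codimension of the fixed space V^g = ker(g - 1) in V is at most 2. -/
/-- If a nonzero alternating bilinear form `κ` satisfies the mixed Jacobi-type
condition for an invertible linear map `g ≠ id`, then the fixed space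
`V^g = ker (g - 1)` has codimension at most 2. -/
theorem stmt0 {k V : Type*} [Field k] [AddCommGroup V] [Module k V]
    [FiniteDimensional k V]
    (g : V ≃ₗ[k] V) (hg : g ≠ LinearEquiv.refl k V)
    (κ : V →ₗ[k] V →ₗ[k] k) (halt : ∀ u : V, κ u u = 0)
    (hcond : ∀ u v w : V,
      κ u v • (g w - w) + κ v w • (g u - u) + κ w u • (g v - v) = 0)
    (hκ : κ ≠ 0) :
    Module.finrank k
      (V ⧸ LinearMap.ker ((g : V →ₗ[k] V) - LinearMap.id)) ≤ 2 := by
  set T : V →ₗ[k] V := (g : V →ₗ[k] V) - LinearMap.id with hT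
  -- find u v with κ u v ≠ 0
  obtain ⟨u, hu⟩ : ∃ u, κ u ≠ 0 := by
    by_contra h
    push_neg at h
    exact hκ (LinearMap.ext fun u => by rw [h u]; rfl)
  obtain ⟨v, huv⟩ : ∃ v, κ u v ≠ 0 := by
    by_contra h
    push_neg at h
    exact hu (LinearMap.ext fun v => h v)
  -- every T w lies in span {T u, T v}
  have hsub : LinearMap.range T ≤ Submodule.span k {T u, T v} := by
    rintro _ ⟨w, rfl⟩
    have h := hcond u v w
    have hTw : T w = g w - w := rfl
    have hTu : T u = g u - u := rfl
    have hTv : T v = g v - v := rfl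
    have key : κ u v • T w = -(κ v w • T u) - κ w u • T v := by
      rw [hTw, hTu, hTv]
      linear_combination (norm := module) h
    have : T w = (κ u v)⁻¹ • (-(κ v w • T u) - κ w u • T v) := by
      rw [← key, smul_smul, inv_mul_cancel₀ huv, one_smul]
    rw [this]
    have h1 : T u ∈ Submodule.span k {T u, T v} :=
      Submodule.subset_span (by simp)
    have h2 : T v ∈ Submodule.span k {T u, T v} :=
      Submodule.subset_span (by simp)
    exact Submodule.smul_mem _ _ (Submodule.sub_mem _ (Submodule.neg_mem _
      (Submodule.smul_mem _ _ h1)) (Submodule.smul_mem _ _ h2))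
  have hq : Module.finrank k (V ⧸ LinearMap.ker T) =
      Module.finrank k (LinearMap.range T) :=
    LinearEquiv.finrank_eq T.quotKerEquivRange
  rw [hq]
  calc Module.finrank k (LinearMap.range T)
      ≤ Module.finrank k (Submodule.span k {T u, T v}) :=
        Submodule.finrank_mono hsub
    _ ≤ 2 := by
        classical
        haveI : Fintype ({T u, T v} : Set V) := Set.fintypeInsert _ _
        refine (finrank_span_le_card ({T u, T v} : Set V)).trans ?_
        rw [Set.toFinset_insert, Set.toFinset_singleton]
        exact (Finset.card_insert_le _ _).trans (by simp)
end

section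
/- Let g be an invertible linear map on a finite-dimensional k-vector space V and κ_g : V × V → k an alternating bilinear form satisfying κ_g(u,v)(g·w - w) + κ_g(v,w)(g·u - u) + κ_g(w,u)(g·v - v) = 0 for all u,v,w ∈ V. If the fixed space V^g = ker(g - 1) has codimension 1 in V, then κ_g(v₁, v₂) = 0 for all v₁, v₂ ∈ V^g. -/
/-- If an alternating bilinear form `κ` satisfies the mixed Jacobi-type condition
for an invertible linear map `g` whose fixed space has codimension 1, then `κ`
vanishes on pairs of fixed vectors. -/
theorem stmt1 {k V : Type*} [Field k] [AddCommGroup V] [Module k V]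
    [FiniteDimensional k V]
    (g : V ≃ₗ[k] V)
    (κ : V →ₗ[k] V →ₗ[k] k) (halt : ∀ u : V, κ u u = 0)
    (hcond : ∀ u v w : V,
      κ u v • (g w - w) + κ v w • (g u - u) + κ w u • (g v - v) = 0)
    (hcodim : Module.finrank k
      (V ⧸ LinearMap.ker ((g : V →ₗ[k] V) - LinearMap.id)) = 1) :
    ∀ v₁ ∈ LinearMap.ker ((g : V →ₗ[k] V) - LinearMap.id),
      ∀ v₂ ∈ LinearMap.ker ((g : V →ₗ[k] V) - LinearMap.id),
        κ v₁ v₂ = 0 := by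
  intro v₁ h₁ v₂ h₂
  rw [LinearMap.mem_ker, LinearMap.sub_apply, LinearMap.id_apply, sub_eq_zero] at h₁ h₂
  -- find w with g w - w ≠ 0
  obtain ⟨w, hw⟩ : ∃ w : V, g w - w ≠ 0 := by
    by_contra h
    push_neg at h
    have hker : LinearMap.ker ((g : V →ₗ[k] V) - LinearMap.id) = ⊤ := by
      ext x
      simp [LinearMap.mem_ker, sub_eq_zero, h x, sub_eq_zero.mp (h x)]
    rw [hker] at hcodim
    have : Module.finrank k (V ⧸ (⊤ : Submodule k V)) = 0 := by
      have : Subsingleton (V ⧸ (⊤ : Submodule k V)) :=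
        Submodule.Quotient.subsingleton_iff.mpr rfl
      exact Module.finrank_zero_of_subsingleton
    omega
  have := hcond v₁ v₂ w
  simp only [LinearEquiv.coe_coe] at h₁ h₂
  rw [h₁, h₂] at this
  simp only [sub_self, smul_zero, add_zero, zero_add] at this
  rcases smul_eq_zero.mp this with h | h
  · exact h
  · exact absurd h hw
end

section
/- Let g be an invertible linear map on a finite-dimensional k-vector space V and κ_g : V × V → k an alternating bilinear form satisfying κ_g(u,v)(g·w - w) + κ_g(v,w)(g·u - u) + κ_g(w,u)(g·v - v) = 0 for all u,v,w ∈ V. If V^g = ker(g - 1) has codimension 2 in V, then every vector of V^g lies in the radical of κ_g, i.e., κ_g(v, w) = 0 for all v ∈ V^g and all w ∈ V. -/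
/-- If an alternating bilinear form `κ` satisfies the mixed Jacobi-type condition
for an invertible linear map `g` whose fixed space has codimension 2, then every
fixed vector lies in the radical of `κ`. -/
theorem stmt2 {k V : Type*} [Field k] [AddCommGroup V] [Module k V]
    [FiniteDimensional k V]
    (g : V ≃ₗ[k] V)
    (κ : V →ₗ[k] V →ₗ[k] k) (halt : ∀ u : V, κ u u = 0)
    (hcond : ∀ u v w : V,
      κ u v • (g w - w) + κ v w • (g u - u) + κ w u • (g v - v) = 0)
    (hcodim : Module.finrank k
      (V ⧸ LinearMap.ker ((g : V →ₗ[k] V) - LinearMap.id)) = 2) :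
    ∀ v ∈ LinearMap.ker ((g : V →ₗ[k] V) - LinearMap.id),
      ∀ w : V, κ v w = 0 := by
  set T : V →ₗ[k] V := (g : V →ₗ[k] V) - LinearMap.id with hT
  have skew : ∀ a b : V, κ a b = - κ b a := by
    intro a b
    have h := halt (a + b)
    simp only [map_add, LinearMap.add_apply, halt] at h
    linear_combination h
  intro v hv w
  by_contra hne
  have hTv : g v - v = 0 := by
    have : T v = 0 := hv
    simpa [hT, sub_eq_zero, LinearMap.sub_apply] using this
  -- every T w' is in the span of T w
  have key : ∀ w' : V, T w' ∈ Submodule.span k {T w} := by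
    intro w'
    have h := hcond v w' w
    rw [hTv, smul_zero, add_zero] at h
    have h2 : κ w v • (g w' - w') = - (κ v w' • (g w - w)) := by
      linear_combination (norm := module) h
    have h3 : κ v w • (g w' - w') = κ v w' • (g w - w) := by
      rw [skew w v] at h2
      linear_combination (norm := module) -h2
    have : T w' = ((κ v w)⁻¹ * κ v w') • T w := by
      have : (g : V →ₗ[k] V) w' - w' = T w' := by simp [hT, LinearMap.sub_apply]
      rw [mul_smul]
      have hTw : (g : V →ₗ[k] V) w - w = T w := by simp [hT, LinearMap.sub_apply]
      calc T w' = (κ v w)⁻¹ • (κ v w • T w') := by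
              rw [smul_smul, inv_mul_cancel₀ hne, one_smul]
        _ = (κ v w)⁻¹ • (κ v w' • T w) := by
              rw [show κ v w • T w' = κ v w' • T w by
                simpa [hT, LinearMap.sub_apply] using h3]
    rw [this]
    exact Submodule.smul_mem _ _ (Submodule.mem_span_singleton_self _)
  have hrange : LinearMap.range T ≤ Submodule.span k {T w} := by
    rintro x ⟨y, rfl⟩; exact key y
  have h1 : Module.finrank k (LinearMap.range T) ≤ 1 := by
    refine le_trans (Submodule.finrank_mono hrange) ?_
    simpa using finrank_span_le_card ({T w} : Set V)
  have h2 : Module.finrank k (LinearMap.range T) = 2 := by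
    rw [← hcodim]
    exact (T.quotKerEquivRange.finrank_eq).symm
  omega
end

section
/- Let G be a group acting linearly on a finite-dimensional k-vector space V, let g, h ∈ G with the images of h - g (as a linear map on V) of dimension at least 2, and let λ_h(g, ·) : V → k be a linear functional satisfying λ_h(g,v)(h·u − g·u) = λ_h(g,u)(h·v − g·v) for all u, v ∈ V. Then λ_h(g, ·) is identically zero. -/
/-- If a linear functional `ℓ` satisfies `ℓ(v)(h·u − g·u) = ℓ(u)(h·v − g·v)` and
the linear map `h − g` has rank at least 2, then `ℓ = 0`. -/
theorem stmt6 {k V : Type*} [Field k] [AddCommGroup V] [Module k V]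
    [FiniteDimensional k V]
    (g h : V ≃ₗ[k] V) (ell : V →ₗ[k] k)
    (hcond : ∀ u v : V, ell v • (h u - g u) = ell u • (h v - g v))
    (hrank : 2 ≤ Module.finrank k
      (LinearMap.range ((h : V →ₗ[k] V) - (g : V →ₗ[k] V)))) :
    ell = 0 := by
  by_contra hne
  obtain ⟨u, hu⟩ : ∃ u, ell u ≠ 0 := by
    by_contra hforall
    push_neg at hforall
    exact hne (LinearMap.ext fun v => hforall v)
  set T : V →ₗ[k] V := (h : V →ₗ[k] V) - (g : V →ₗ[k] V) with hT
  have hTv : ∀ v, T v = h v - g v := fun v => rfl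
  have hle : LinearMap.range T ≤ k ∙ T u := by
    rintro _ ⟨v, rfl⟩
    have := hcond u v
    rw [← hTv, ← hTv] at this
    have : T v = (ell u)⁻¹ • (ell v • T u) := by
      rw [this, smul_smul, inv_mul_cancel₀ hu, one_smul]
    rw [this]
    exact Submodule.smul_mem _ _ (Submodule.smul_mem _ _ (Submodule.mem_span_singleton_self _))
  have h1 : Module.finrank k (LinearMap.range T) ≤ Module.finrank k (k ∙ T u) :=
    Submodule.finrank_mono hle
  have h2 : Module.finrank k (k ∙ T u) ≤ 1 := by
    rcases eq_or_ne (T u) 0 with h0 | h0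
    · rw [h0, Submodule.span_zero_singleton]; simp
    · rw [finrank_span_singleton h0]
  omega
end

section
/- Let G act linearly on a finite-dimensional vector space V over a field k with |G| invertible in k. Suppose for each a ∈ G there is a linear functional γ_a : V → k satisfying γ_a(v)(u − a·u) = γ_a(u)(v − a·v) for all u,v ∈ V, obtained by averaging: γ_a(v) = (1/|G|) Σ_{b∈G} λ_{ab}(b, b⁻¹·v) where λ satisfies Condition (3) of Theorem 2.1 (λ_h(g,v)(h·u − g·u) = λ_h(g,u)(h·v − g·v)). Then indeed γ_a(v)(u − a·u) − γ_a(u)(v − a·v) = 0 for all a ∈ G and u,v ∈ V. -/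
/-!
Substituting `g = b`, `h = a * b` and the vectors `b⁻¹ • u`, `b⁻¹ • v` into Condition (3) turns
its `b`-th instance into the `b`-th summand of the identity for `γ_a`; summing over `b` and
scaling by `1 / |G|` gives the claim.
-/

namespace Representation

variable {k G V : Type*} [Semiring k] [Group G] [AddCommGroup V] [Module k V]
  (ρ : Representation k G V)

theorem mul_apply_inv_apply (a b : G) (x : V) : ρ (a * b) (ρ b⁻¹ x) = ρ a x := by
  rw [map_mul, Module.End.mul_apply, self_inv_apply]

theorem smul_sub_apply_comm_of_translate {c : G → V → G → k}
    (hc : ∀ (g h : G) (u v : V), c g v h • (ρ h u - ρ g u) = c g u h • (ρ h v - ρ g v))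
    (a b : G) (u v : V) :
    c b (ρ b⁻¹ v) (a * b) • (u - ρ a u) = c b (ρ b⁻¹ u) (a * b) • (v - ρ a v) := by
  have h := hc b (a * b) (ρ b⁻¹ u) (ρ b⁻¹ v)
  rw [mul_apply_inv_apply, mul_apply_inv_apply, self_inv_apply, self_inv_apply] at h
  rw [← neg_sub (ρ a u), ← neg_sub (ρ a v), smul_neg, smul_neg, h]

end Representation

theorem stmt9_general {k G V : Type*} [Field k] [Group G] [Fintype G]
    [AddCommGroup V] [Module k V]
    (ρ : Representation k G V)
    (lam : G → V →ₗ[k] MonoidAlgebra k G)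
    (hcond3 : ∀ (g h : G) (u v : V),
      ((lam g v).coeff h) • (ρ h u - ρ g u) = ((lam g u).coeff h) • (ρ h v - ρ g v))
    (γ : G → V → k)
    (hγ : ∀ (a : G) (v : V),
      γ a v = (Fintype.card G : k)⁻¹ * ∑ b : G, (lam b (ρ b⁻¹ v)).coeff (a * b)) :
    ∀ (a : G) (u v : V), γ a v • (u - ρ a u) - γ a u • (v - ρ a v) = 0 := by
  intro a u v
  rw [hγ, hγ, sub_eq_zero, mul_smul, mul_smul, Finset.sum_smul, Finset.sum_smul]
  congr 1
  exact Finset.sum_congr rfl fun b _ =>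
    ρ.smul_sub_apply_comm_of_translate (c := fun g x h => (lam g x).coeff h) hcond3 a b u v

/-- The averaged functionals `γ_a` inherit Condition (3) of Theorem 2.1:
`γ_a(v)(u − a·u) − γ_a(u)(v − a·v) = 0`. -/
theorem stmt9 {k G V : Type*} [Field k] [Group G] [Fintype G]
    [AddCommGroup V] [Module k V] [FiniteDimensional k V]
    (hcard : (Fintype.card G : k) ≠ 0)
    (ρ : Representation k G V)
    (lam : G → V →ₗ[k] MonoidAlgebra k G)
    (hcond3 : ∀ (g h : G) (u v : V),
      ((lam g v).coeff h) • (ρ h u - ρ g u) = ((lam g u).coeff h) • (ρ h v - ρ g v))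
    (γ : G → V → k)
    (hγ : ∀ (a : G) (v : V),
      γ a v = (Fintype.card G : k)⁻¹ * ∑ b : G, (lam b (ρ b⁻¹ v)).coeff (a * b)) :
    ∀ (a : G) (u v : V), γ a v • (u - ρ a u) - γ a u • (v - ρ a v) = 0 :=
  stmt9_general ρ lam hcond3 γ hγ
end

section
/- Let k be a field of characteristic p, G = ⟨g⟩ cyclic of order p acting on V = k² by g·v = v, g·w = v + w. Define κ : V × V → kG alternating bilinear by κ(v,w) = g. Then κ is G-covariant in the sense required by PBW Condition (2) with the λ of Example 2.2: κ(g·u₁, g·u₂)·g − g·κ(u₁,u₂) = λ(λ(g,u₂), u₁) − λ(λ(g,u₁), u₂) for all u₁, u₂ ∈ V, where λ(gⁱ,v)=0 and λ(gⁱ,w)=i g^{i−1}. -/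
noncomputable section

variable (k : Type*) [Field k] (p : ℕ) [Fact p.Prime] [CharP k p]

/-- The action of `gⁱ` on `V = k²` (basis `v, w`) by the matrix `[[1,i],[0,1]]`. -/
def act (i : ZMod p) (u : k × k) : k × k :=
  (u.1 + (ZMod.castHom (dvd_refl p) k i) * u.2, u.2)

/-- The parameter `λ(gⁱ, u₁·v + u₂·w) = u₂ · i · g^{i−1}` of Example 2.2. -/
def lam (i : ZMod p) (u : k × k) :
    MonoidAlgebra k (Multiplicative (ZMod p)) :=
  ((ZMod.castHom (dvd_refl p) k i) * u.2) •
    MonoidAlgebra.single (Multiplicative.ofAdd (i - 1)) (1 : k)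

/-- The extension of `λ` linearly over `kG` in its first argument. -/
def Lam (x : MonoidAlgebra k (Multiplicative (ZMod p))) (u : k × k) :
    MonoidAlgebra k (Multiplicative (ZMod p)) :=
  Finsupp.sum x.coeff fun h c => c • lam k p (Multiplicative.toAdd h) u

/-- The alternating bilinear map with `κ(v,w) = g`. -/
def kap (u₁ u₂ : k × k) : MonoidAlgebra k (Multiplicative (ZMod p)) :=
  (u₁.1 * u₂.2 - u₁.2 * u₂.1) •
    MonoidAlgebra.single (Multiplicative.ofAdd (1 : ZMod p)) (1 : k)

/- Both sides vanish. The generator acts by a matrix of determinant 1, so `κ` is `G`-invariant,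
and as `kG` is commutative the left side is zero. On the right, `λ(g, u)` is a multiple of the
identity `g⁰`, and `λ(g⁰, ·) = 0` because of the factor `i = 0`. -/

theorem kap_act (i : ZMod p) (u₁ u₂ : k × k) :
    kap k p (act k p i u₁) (act k p i u₂) = kap k p u₁ u₂ := by
  simp only [kap, act]
  ring_nf

theorem lam_zero (u : k × k) : lam k p 0 u = 0 := by
  simp [lam]

theorem lam_one (u : k × k) : lam k p 1 u = MonoidAlgebra.single 1 u.2 := by
  simp [lam, MonoidAlgebra.smul_single]

theorem Lam_single (h : Multiplicative (ZMod p)) (c : k) (u : k × k) :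
    Lam k p (MonoidAlgebra.single h c) u = c • lam k p (Multiplicative.toAdd h) u := by
  simp [Lam, Finsupp.sum_single_index]

theorem Lam_single_one (c : k) (u : k × k) : Lam k p (MonoidAlgebra.single 1 c) u = 0 := by
  rw [Lam_single, toAdd_one, lam_zero, smul_zero]

/-- PBW Condition (2) for Example 2.2:
`κ(g·u₁, g·u₂)·g − g·κ(u₁,u₂) = λ(λ(g,u₂),u₁) − λ(λ(g,u₁),u₂)`. -/
theorem stmt12 :
    ∀ u₁ u₂ : k × k,
      kap k p (act k p 1 u₁) (act k p 1 u₂)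
          * MonoidAlgebra.single (Multiplicative.ofAdd (1 : ZMod p)) (1 : k)
        - MonoidAlgebra.single (Multiplicative.ofAdd (1 : ZMod p)) (1 : k)
          * kap k p u₁ u₂
        = Lam k p (lam k p 1 u₂) u₁ - Lam k p (lam k p 1 u₁) u₂ := by
  intro u₁ u₂
  rw [kap_act, mul_comm, sub_self, lam_one, lam_one, Lam_single_one, Lam_single_one, sub_self]
end
end

section
/- In the setting of Example 7.2: let k have characteristic 2, G = ⟨g⟩ of order 2 acting on V = k² by g·v = v, g·w = v + w. Let H_{λ,κ} = k⟨v,w,g⟩/(g² − 1, gv − vg, gw − vg − wg − 1, vw − wv − g) and H_{0,κ'} = k⟨v,w,g⟩/(g² − 1, gv − vg, gw − vg − wg, vw − wv − g + vg⁻¹). Then the algebra map f determined by f(g) = g, f(v) = v − g⁻¹, f(w) = w is a well-defined algebra homomorphism H_{λ,κ} → H_{0,κ'}, i.e., f annihilates the defining relations of H_{λ,κ}. -/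
noncomputable section

open FreeAlgebra

variable (k : Type*) [Field k]

/-- The generator `v` of the free algebra `k⟨v,w,g⟩`. -/
def Xv : FreeAlgebra k (Fin 3) := ι k 0
/-- The generator `w` of the free algebra `k⟨v,w,g⟩`. -/
def Xw : FreeAlgebra k (Fin 3) := ι k 1
/-- The generator `g` of the free algebra `k⟨v,w,g⟩`. -/
def Xg : FreeAlgebra k (Fin 3) := ι k 2

/-- Relations of `H_{0,κ'} = k⟨v,w,g⟩/(g² − 1, gv − vg, gw − vg − wg,
vw − wv − g + vg⁻¹)` of Example 7.2 (note `g⁻¹ = g` since `g² = 1`). -/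
def relD' : FreeAlgebra k (Fin 3) → FreeAlgebra k (Fin 3) → Prop := fun a b =>
  (a = Xg k * Xv k ∧ b = Xv k * Xg k) ∨
  (a = Xg k * Xw k ∧ b = Xv k * Xg k + Xw k * Xg k) ∨
  (a = Xv k * Xw k ∧ b = Xw k * Xv k + Xg k - Xv k * Xg k) ∨
  (a = Xg k * Xg k ∧ b = 1)

/-- Example 7.2: the substitution `f(g) = g`, `f(v) = v − g⁻¹`, `f(w) = w`
annihilates the defining relations of `H_{λ,κ}`, hence gives a well-defined
algebra homomorphism `H_{λ,κ} → H_{0,κ'}`. -/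
theorem stmt14 [CharP k 2] :
    let m := RingQuot.mkAlgHom k (relD' k)
    let fv := m (Xv k) - m (Xg k)
    let fw := m (Xw k)
    let fg := m (Xg k)
    fg * fg - 1 = 0 ∧
    fg * fv - fv * fg = 0 ∧
    fg * fw - fv * fg - fw * fg - 1 = 0 ∧
    fv * fw - fw * fv - fg = 0 := by
  intro m fv fw fg
  have key : ∀ a b, relD' k a b → m a = m b := fun a b h =>
    RingQuot.mkAlgHom_rel k h
  have hca : fg * (m (Xv k)) = (m (Xv k)) * fg := by
    have := key _ _ (Or.inl ⟨rfl, rfl⟩)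
    simpa [map_mul] using this
  have hcb : fg * fw = (m (Xv k)) * fg + fw * fg := by
    have := key _ _ (Or.inr (Or.inl ⟨rfl, rfl⟩))
    simpa [map_mul] using this
  have hab : (m (Xv k)) * fw = fw * (m (Xv k)) + fg - (m (Xv k)) * fg := by
    have := key _ _ (Or.inr (Or.inr (Or.inl ⟨rfl, rfl⟩)))
    simpa [map_mul, map_add, map_sub] using this
  have hcc : fg * fg = 1 := by
    have := key _ _ (Or.inr (Or.inr (Or.inr ⟨rfl, rfl⟩)))
    simpa [map_mul] using this
  have h2 : ∀ x : RingQuot (relD' k), x + x = 0 := by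
    intro x
    have : (2 : RingQuot (relD' k)) = 0 := by
      calc (2 : RingQuot (relD' k)) = algebraMap k _ 2 := by
            simp [map_ofNat]
        _ = algebraMap k _ 0 := by
            congr 1
            exact_mod_cast CharP.cast_eq_zero k 2
        _ = 0 := map_zero _
    calc x + x = 2 * x := by rw [two_mul]
      _ = 0 := by rw [this, zero_mul]
  refine ⟨by rw [hcc]; abel, ?_, ?_, ?_⟩
  · show fg * (m (Xv k) - fg) - (m (Xv k) - fg) * fg = 0
    rw [mul_sub, sub_mul, hca]
    abel
  · show fg * fw - (m (Xv k) - fg) * fg - fw * fg - 1 = 0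
    rw [hcb, sub_mul, hcc]
    abel
  · show (m (Xv k) - fg) * fw - fw * (m (Xv k) - fg) - fg = 0
    rw [sub_mul, mul_sub, hab, hcb]
    have := h2 (m (Xv k) * fg)
    linear_combination (norm := noncomm_ring) -this
end
end

section
/- Let G be a group acting linearly on V, and suppose λ : kG ⊗ V → kG is the first-order parameter of a graded deformation of S(V)#G, so that λ satisfies Conditions (1) and (3) of Theorem 2.1. If for some g, h ∈ G the linear map v ↦ h·v − g·v on V has rank exactly 1 with kernel K, then the functional λ_h(g,·) vanishes on K; that is, λ_h(g,·) is supported off the 'reflecting hyperplane' K of h⁻¹g. -/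
theorem LinearMap.eq_zero_on_ker_of_smul_apply_symm {k V W : Type*} [Field k]
    [AddCommGroup V] [Module k V] [AddCommGroup W] [Module k W]
    {f : V →ₗ[k] W} (hf : f ≠ 0) {c : V → k} (hc : ∀ u v, c v • f u = c u • f v) :
    ∀ v ∈ LinearMap.ker f, c v = 0 := by
  intro v hv
  obtain ⟨u, hu⟩ : ∃ u, f u ≠ 0 := by
    by_contra! h
    exact hf (LinearMap.ext h)
  have h := hc u v
  rw [LinearMap.mem_ker.mp hv, smul_zero] at h
  exact (smul_eq_zero.mp h).resolve_right hu

theorem LinearMap.ne_zero_of_finrank_range_eq_one {k V W : Type*} [Field k]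
    [AddCommGroup V] [Module k V] [AddCommGroup W] [Module k W]
    {f : V →ₗ[k] W} (hf : Module.finrank k (LinearMap.range f) = 1) : f ≠ 0 := by
  rintro rfl
  rw [LinearMap.range_zero, finrank_bot] at hf
  exact zero_ne_one hf

theorem stmt16_general {k G V : Type*} [Field k] [Group G]
    [AddCommGroup V] [Module k V]
    (ρ : Representation k G V)
    (lam : G → V →ₗ[k] MonoidAlgebra k G)
    (hcond3 : ∀ (g h : G) (u v : V),
      ((lam g v).coeff h) • (ρ h u - ρ g u) = ((lam g u).coeff h) • (ρ h v - ρ g v))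
    (g h : G)
    (hrank : Module.finrank k (LinearMap.range (ρ h - ρ g)) = 1) :
    ∀ v ∈ LinearMap.ker (ρ h - ρ g), (lam g v).coeff h = 0 :=
  LinearMap.eq_zero_on_ker_of_smul_apply_symm
    (LinearMap.ne_zero_of_finrank_range_eq_one hrank) (hcond3 g h)

/-- If `λ` satisfies Conditions (1) and (3) of Theorem 2.1 and the map
`v ↦ h·v − g·v` has rank exactly 1 with kernel `K`, then the coefficient
functional `λ_h(g,·)` vanishes on `K`. -/
theorem stmt16 {k G V : Type*} [Field k] [Group G]
    [AddCommGroup V] [Module k V] [FiniteDimensional k V]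
    (ρ : Representation k G V)
    (lam : G → V →ₗ[k] MonoidAlgebra k G)
    (hcoc : ∀ (g h : G) (v : V),
      lam (g * h) v
        = lam g (ρ h v) * MonoidAlgebra.single h (1 : k)
          + MonoidAlgebra.single g (1 : k) * lam h v)
    (hcond3 : ∀ (g h : G) (u v : V),
      ((lam g v).coeff h) • (ρ h u - ρ g u) = ((lam g u).coeff h) • (ρ h v - ρ g v))
    (g h : G)
    (hrank : Module.finrank k (LinearMap.range (ρ h - ρ g)) = 1) :
    ∀ v ∈ LinearMap.ker (ρ h - ρ g), (lam g v).coeff h = 0 :=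
  stmt16_general ρ lam hcond3 g h hrank
end

section
/- Let g be a linear automorphism of a finite-dimensional k-vector space V that is not a reflection and not the identity (i.e., codim V^g ≥ 2), and suppose the linear functional ℓ : V → k satisfies ℓ(v)(u − g·u) = ℓ(u)(v − g·v) for all u,v ∈ V. Then ℓ ≡ 0. -/
/-- If `g` is an invertible linear map with `codim V^g ≥ 2` (neither the
identity nor a reflection) and `ℓ` satisfies
`ℓ(v)(u − g·u) = ℓ(u)(v − g·v)` for all `u, v`, then `ℓ = 0`. -/
theorem stmt17 {k V : Type*} [Field k] [AddCommGroup V] [Module k V]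
    [FiniteDimensional k V]
    (g : V ≃ₗ[k] V) (ell : V →ₗ[k] k)
    (hcodim : 2 ≤ Module.finrank k
      (V ⧸ LinearMap.ker ((g : V →ₗ[k] V) - LinearMap.id)))
    (hcond : ∀ u v : V, ell v • (u - g u) = ell u • (v - g v)) :
    ell = 0 := by
  by_contra h
  obtain ⟨v, hv⟩ : ∃ v, ell v ≠ 0 := by
    by_contra hall
    push_neg at hall
    exact h (LinearMap.ext fun x => by simp [hall x])
  set f : V →ₗ[k] V := (g : V →ₗ[k] V) - LinearMap.id with hf
  have hrange : LinearMap.range f ≤ Submodule.span k {v - g v} := by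
    rintro x ⟨u, rfl⟩
    have hu : u - g u = ((ell v)⁻¹ * ell u) • (v - g v) := by
      have := hcond u v
      rw [mul_smul, ← this, smul_smul, inv_mul_cancel₀ hv, one_smul]
    have : f u = (-((ell v)⁻¹ * ell u)) • (v - g v) := by
      simp only [hf, LinearMap.sub_apply, LinearMap.id_apply, LinearEquiv.coe_coe]
      rw [neg_smul, ← hu]
      abel
    rw [this]
    exact Submodule.smul_mem _ _ (Submodule.mem_span_singleton_self _)
  have h1 : Module.finrank k (V ⧸ LinearMap.ker f) =
      Module.finrank k (LinearMap.range f) :=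
    (f.quotKerEquivRange).finrank_eq
  have h2 : Module.finrank k (LinearMap.range f) ≤ 1 := by
    calc Module.finrank k (LinearMap.range f)
        ≤ Module.finrank k (Submodule.span k {v - g v}) :=
          Submodule.finrank_mono hrange
      _ ≤ 1 := (finrank_span_le_card _).trans (by simp)
  omega
end
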